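/- arXiv:2212.14150 — 4 statements merged into one kernel-verified Lean document; each statement's English description precedes it below -/
import Mathlib

section
/- Consider deep matrix factorization with a preconditioned gradient step of learning rate η and scalar preconditioner a with 0 < a ≤ Λ, and suppose ‖W_l(i)‖ ≤ M for all l and ‖W(i) − W*‖ ≤ B, where ℓ(W) = (1/2)‖W − W*‖_F². Define the higher-order term E(i) = W(i+1) − W(i) + η·a·Σ_{l=1}^{L} W_{l+1:L}(i) W_{l+1:L}(i)ᵀ ∇ℓ(W(i)) W_{1:l−1}(i)ᵀ W_{1:l−1}(i), i.e. the difference between the updated product matrix and its first-order (in η) expansion. If η ≤ 1/(2LΛM^{L−2}B), then ‖E(i)‖_F ≤ 2η²L²Λ²M^{3L−4}B·‖∇ℓ(W(i))‖_F. -/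
open scoped BigOperators
open Matrix

/-- Frobenius norm of a real matrix. -/
noncomputable def frobNorm {m n : Type*} [Fintype m] [Fintype n] (A : Matrix m n ℝ) : ℝ :=
  Real.sqrt (∑ i, ∑ j, (A i j) ^ 2)

/-- Spectral norm (largest singular value) of a real matrix. -/
noncomputable def specNorm {m n : Type*} [Fintype m] [Fintype n] (A : Matrix m n ℝ) : ℝ :=
  sSup {c | ∃ x : n → ℝ, (∑ j, x j ^ 2) = 1 ∧ c = Real.sqrt (∑ i, (A.mulVec x i) ^ 2)}

/-!
Write `Δ_l = W'_l - W_l` and `D_l = Q'_l - Q_l`. Since `P_{l+1} W_l = P_l`, the sum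
`∑_l P_{l+1} Δ_l Q'_l` telescopes to `Q'_L - Q_L`; its first-order part `∑_l P_{l+1} Δ_l Q_l` is
`-ηa ∑_l P_{l+1} P_{l+1}ᵀ ∇ℓ Q_lᵀ Q_l`, so the higher-order term is `E = ∑_l P_{l+1} Δ_l D_l`.
Every increment satisfies `‖Δ_l‖ ≤ δ := ηaM^{L-1}B` and `‖Δ_l‖_F ≤ ηaM^{L-1}‖∇ℓ‖_F`, and the
step-size condition gives `2Lδ ≤ M`. Then `D_{l+1} = W'_l D_l + Δ_l Q_l` with
`‖W'_l‖ ≤ M + δ` keeps `‖D_l‖_F ≤ 2l · ηaM^{L-1}‖∇ℓ‖_F · M^{l-1}` by induction, and summing the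
`L` terms of `E` gives the bound.
-/

section MatrixNorms

variable {m n p : Type*} [Fintype m] [Fintype n] [Fintype p]

section SpectralNorm

open scoped Matrix.Norms.L2Operator

theorem specNorm_eq_l2_opNorm [DecidableEq n] (A : Matrix m n ℝ) : specNorm A = ‖A‖ := by
  rw [l2_opNorm_def, ← ContinuousLinearMap.sSup_sphere_eq_norm]
  refine congrArg sSup (Set.ext fun c => ?_)
  simp only [Set.mem_ofPred_eq, Set.mem_image, mem_sphere_iff_norm, sub_zero,
    EuclideanSpace.norm_eq, Real.norm_eq_abs, sq_abs, Real.sqrt_eq_one]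
  constructor
  · rintro ⟨x, hx, rfl⟩
    exact ⟨WithLp.toLp 2 x, hx, rfl⟩
  · rintro ⟨x, hx, rfl⟩
    exact ⟨x.ofLp, hx, rfl⟩

theorem specNorm_nonneg (A : Matrix m n ℝ) : 0 ≤ specNorm A := by
  classical
  exact specNorm_eq_l2_opNorm A ▸ norm_nonneg A

theorem specNorm_mul_le (A : Matrix m n ℝ) (B : Matrix n p ℝ) :
    specNorm (A * B) ≤ specNorm A * specNorm B := by
  classical
  simpa only [specNorm_eq_l2_opNorm] using l2_opNorm_mul A B

theorem specNorm_transpose (A : Matrix m n ℝ) : specNorm Aᵀ = specNorm A := by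
  classical
  rw [specNorm_eq_l2_opNorm, specNorm_eq_l2_opNorm, ← conjTranspose_eq_transpose_of_trivial,
    l2_opNorm_conjTranspose]

theorem specNorm_smul (c : ℝ) (A : Matrix m n ℝ) : specNorm (c • A) = |c| * specNorm A := by
  classical
  rw [specNorm_eq_l2_opNorm, specNorm_eq_l2_opNorm, norm_smul, Real.norm_eq_abs]

theorem specNorm_neg (A : Matrix m n ℝ) : specNorm (-A) = specNorm A := by
  classical
  rw [specNorm_eq_l2_opNorm, specNorm_eq_l2_opNorm, norm_neg]

theorem specNorm_add_le (A B : Matrix m n ℝ) : specNorm (A + B) ≤ specNorm A + specNorm B := by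
  classical
  simpa only [specNorm_eq_l2_opNorm] using norm_add_le A B

theorem specNorm_one_le [DecidableEq n] : specNorm (1 : Matrix n n ℝ) ≤ 1 := by
  rw [specNorm_eq_l2_opNorm, cstar_norm_def, map_one]
  exact ContinuousLinearMap.norm_id_le

theorem norm_toLp_mulVec_le (A : Matrix m n ℝ) (x : n → ℝ) :
    ‖WithLp.toLp 2 (A *ᵥ x)‖ ≤ specNorm A * ‖WithLp.toLp 2 x‖ := by
  classical
  rw [specNorm_eq_l2_opNorm]
  exact l2_opNorm_mulVec A (WithLp.toLp 2 x)

end SpectralNorm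

section FrobeniusNorm

open scoped Matrix.Norms.Frobenius

theorem frobNorm_eq_frobenius_norm (A : Matrix m n ℝ) : frobNorm A = ‖A‖ := by
  simp only [frobNorm, frobenius_norm_def, Real.norm_eq_abs, Real.rpow_two, sq_abs,
    Real.sqrt_eq_rpow]

theorem frobNorm_nonneg (A : Matrix m n ℝ) : 0 ≤ frobNorm A :=
  Real.sqrt_nonneg _

theorem frobNorm_transpose (A : Matrix m n ℝ) : frobNorm Aᵀ = frobNorm A := by
  simp only [frobNorm_eq_frobenius_norm, frobenius_norm_transpose]

theorem frobNorm_smul (c : ℝ) (A : Matrix m n ℝ) : frobNorm (c • A) = |c| * frobNorm A := by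
  rw [frobNorm_eq_frobenius_norm, frobNorm_eq_frobenius_norm, norm_smul, Real.norm_eq_abs]

theorem frobNorm_neg (A : Matrix m n ℝ) : frobNorm (-A) = frobNorm A := by
  rw [frobNorm_eq_frobenius_norm, frobNorm_eq_frobenius_norm, norm_neg]

theorem frobNorm_sum_le {ι : Type*} (s : Finset ι) (f : ι → Matrix m n ℝ) :
    frobNorm (∑ i ∈ s, f i) ≤ ∑ i ∈ s, frobNorm (f i) := by
  simpa only [frobNorm_eq_frobenius_norm] using norm_sum_le s f

theorem frobNorm_add_le (A B : Matrix m n ℝ) : frobNorm (A + B) ≤ frobNorm A + frobNorm B := by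
  simpa only [frobNorm_eq_frobenius_norm] using norm_add_le A B

end FrobeniusNorm

theorem frobNorm_sq_eq_sum_col (A : Matrix m n ℝ) :
    frobNorm A ^ 2 = ∑ j, ‖WithLp.toLp 2 (fun i => A i j)‖ ^ 2 := by
  simp only [frobNorm, EuclideanSpace.norm_eq, Real.norm_eq_abs, sq_abs]
  rw [Real.sq_sqrt (by positivity), Finset.sum_comm]
  exact Finset.sum_congr rfl fun j _ => (Real.sq_sqrt (by positivity)).symm

theorem frobNorm_mul_le_specNorm_mul (A : Matrix m n ℝ) (B : Matrix n p ℝ) :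
    frobNorm (A * B) ≤ specNorm A * frobNorm B := by
  have hcol : ∀ j, (fun i => (A * B) i j) = A *ᵥ fun k => B k j := fun j => by
    ext i; simp [mul_apply, mulVec, dotProduct]
  refine (pow_le_pow_iff_left₀ (frobNorm_nonneg _)
    (mul_nonneg (specNorm_nonneg A) (frobNorm_nonneg B)) two_ne_zero).1 ?_
  rw [mul_pow, frobNorm_sq_eq_sum_col, frobNorm_sq_eq_sum_col, Finset.mul_sum]
  gcongr with j
  rw [hcol, ← mul_pow]
  gcongr
  exact norm_toLp_mulVec_le A _

theorem frobNorm_mul_le_mul_specNorm (A : Matrix m n ℝ) (B : Matrix n p ℝ) :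
    frobNorm (A * B) ≤ frobNorm A * specNorm B := by
  rw [← frobNorm_transpose, transpose_mul, ← frobNorm_transpose A, ← specNorm_transpose B,
    mul_comm]
  exact frobNorm_mul_le_specNorm_mul Bᵀ Aᵀ

end MatrixNorms

theorem two_mul_increment_bound_le {L : ℕ} {η a Λ M B : ℝ} (hL : 2 ≤ L) (hη : 0 < η)
    (haΛ : a ≤ Λ) (hM : 0 ≤ M) (hB : 0 ≤ B)
    (hηs : η ≤ 1 / (2 * L * Λ * M ^ (L - 2) * B)) :
    2 * L * (η * a * M ^ (L - 1) * B) ≤ M := by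
  set D := 2 * L * Λ * M ^ (L - 2) * B
  have hηD : η * D ≤ 1 := by
    rcases le_or_gt D 0 with hD | hD
    · nlinarith
    · exact (le_div_iff₀ hD).1 (by simpa using hηs)
  calc 2 * L * (η * a * M ^ (L - 1) * B) ≤ 2 * L * (η * Λ * M ^ (L - 1) * B) := by gcongr
    _ = η * D * M := by rw [show L - 1 = L - 2 + 1 by omega, pow_succ]; ring
    _ ≤ M := mul_le_of_le_one_left hM hηD

theorem bound_of_perturbed_recursion {x : ℕ → ℝ} {M δ c : ℝ} {N : ℕ} (hδ : 0 ≤ δ) (hc : 0 ≤ c)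
    (hδM : 2 * N * δ ≤ M) (hx0 : x 0 = 0)
    (hstep : ∀ l < N, x (l + 1) ≤ (M + δ) * x l + c * M ^ l) :
    ∀ l ≤ N, x l ≤ 2 * l * c * M ^ (l - 1) := by
  have hM : 0 ≤ M := le_trans (by positivity) hδM
  intro l hl
  induction l with
  | zero => simp [hx0]
  | succ l ih =>
    have hlN : l < N := hl
    specialize ih hlN.le
    rcases l with _ | k
    · have h1 := hstep 0 hlN
      simp only [hx0, mul_zero, zero_add, pow_zero, mul_one] at h1
      norm_num
      linarith
    · have hdrift : 2 * (k + 1 : ℕ) * δ ≤ M := le_trans (by gcongr) hδM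
      calc x (k + 1 + 1) ≤ (M + δ) * x (k + 1) + c * M ^ (k + 1) := hstep _ hlN
        _ ≤ (M + δ) * (2 * (k + 1 : ℕ) * c * M ^ k) + c * M ^ (k + 1) := by
          gcongr
          simpa using ih
        _ = 2 * (k + 1 : ℕ) * c * M ^ (k + 1) + c * M ^ k * (2 * (k + 1 : ℕ) * δ)
            + c * M ^ (k + 1) := by ring
        _ ≤ 2 * (k + 1 : ℕ) * c * M ^ (k + 1) + c * M ^ k * M + c * M ^ (k + 1) := by
          gcongr
        _ = 2 * (k + 1 + 1 : ℕ) * c * M ^ (k + 1 + 1 - 1) := by push_cast; ring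

section DeepMatrixFactorization

variable {n : ℕ → ℕ} {L : ℕ}

theorem specNorm_prefix_le {W : ∀ l, Matrix (Fin (n (l + 1))) (Fin (n l)) ℝ}
    {Q : ∀ l, Matrix (Fin (n l)) (Fin (n 0)) ℝ} {M : ℝ}
    (hQ0 : Q 0 = 1) (hQs : ∀ l < L, Q (l + 1) = W l * Q l) (hM : ∀ l < L, specNorm (W l) ≤ M) :
    ∀ l ≤ L, specNorm (Q l) ≤ M ^ l := by
  intro l hl
  induction l with
  | zero => simpa [hQ0] using specNorm_one_le
  | succ l ih =>
    rw [hQs l hl, pow_succ']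
    exact (specNorm_mul_le _ _).trans <| mul_le_mul (hM l hl) (ih (by omega))
      (specNorm_nonneg _) ((specNorm_nonneg _).trans (hM l hl))

theorem specNorm_suffix_le {W : ∀ l, Matrix (Fin (n (l + 1))) (Fin (n l)) ℝ}
    {P : ∀ l, Matrix (Fin (n L)) (Fin (n l)) ℝ} {M : ℝ}
    (hPL : P L = 1) (hPs : ∀ l < L, P l = P (l + 1) * W l) (hM : ∀ l < L, specNorm (W l) ≤ M) :
    ∀ l ≤ L, specNorm (P l) ≤ M ^ (L - l) := by
  suffices h : ∀ k l, l + k = L → specNorm (P l) ≤ M ^ k from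
    fun l hl => h (L - l) l (by omega)
  intro k
  induction k with
  | zero =>
    intro l hl
    obtain rfl : l = L := hl
    rw [hPL, pow_zero]
    exact specNorm_one_le
  | succ k ih =>
    intro l hl
    have hlt : l < L := by omega
    rw [hPs l hlt, pow_succ]
    exact (specNorm_mul_le _ _).trans <| mul_le_mul (ih (l + 1) (by omega)) (hM l hlt)
      (specNorm_nonneg _) (pow_nonneg ((specNorm_nonneg _).trans (hM l hlt)) k)

theorem sum_suffix_mul_sub_mul_prefix_eq {R : Type*} [CommRing R]
    (W V : ∀ l, Matrix (Fin (n (l + 1))) (Fin (n l)) R)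
    (P : ∀ l, Matrix (Fin (n L)) (Fin (n l)) R) (Q : ∀ l, Matrix (Fin (n l)) (Fin (n 0)) R)
    (hPL : P L = 1) (hPs : ∀ l < L, P l = P (l + 1) * W l)
    (hQ0 : Q 0 = 1) (hQs : ∀ l < L, Q (l + 1) = V l * Q l) :
    ∑ l ∈ Finset.range L, P (l + 1) * (V l - W l) * Q l = Q L - P 0 := by
  have h : ∀ l ∈ Finset.range L,
      P (l + 1) * (V l - W l) * Q l = P (l + 1) * Q (l + 1) - P l * Q l := fun l hl => by
    rw [hQs l (Finset.mem_range.1 hl), hPs l (Finset.mem_range.1 hl)]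
    simp only [Matrix.mul_sub, Matrix.sub_mul, Matrix.mul_assoc]
  rw [Finset.sum_congr rfl h, Finset.sum_range_sub (fun l => P l * Q l), hPL, hQ0,
    Matrix.one_mul, Matrix.mul_one]

theorem prefix_sub_prefix_eq_sum {R : Type*} [CommRing R]
    (W W' : ∀ l, Matrix (Fin (n (l + 1))) (Fin (n l)) R)
    (P : ∀ l, Matrix (Fin (n L)) (Fin (n l)) R) (Q Q' : ∀ l, Matrix (Fin (n l)) (Fin (n 0)) R)
    (hPL : P L = 1) (hPs : ∀ l < L, P l = P (l + 1) * W l)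
    (hQ0 : Q 0 = 1) (hQs : ∀ l < L, Q (l + 1) = W l * Q l)
    (hQ0' : Q' 0 = 1) (hQs' : ∀ l < L, Q' (l + 1) = W' l * Q' l) :
    Q' L - Q L = ∑ l ∈ Finset.range L, P (l + 1) * (W' l - W l) * Q' l := by
  have h := sum_suffix_mul_sub_mul_prefix_eq W W P Q hPL hPs hQ0 hQs
  simp only [sub_self, Matrix.mul_zero, Matrix.zero_mul, Finset.sum_const_zero] at h
  rw [sum_suffix_mul_sub_mul_prefix_eq W W' P Q' hPL hPs hQ0' hQs', eq_of_sub_eq_zero h.symm]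

theorem frobNorm_prefix_sub_le {W W' : ∀ l, Matrix (Fin (n (l + 1))) (Fin (n l)) ℝ}
    {Q Q' : ∀ l, Matrix (Fin (n l)) (Fin (n 0)) ℝ} {M δ δF : ℝ}
    (hQ0 : Q 0 = 1) (hQs : ∀ l < L, Q (l + 1) = W l * Q l)
    (hQ0' : Q' 0 = 1) (hQs' : ∀ l < L, Q' (l + 1) = W' l * Q' l)
    (hM : ∀ l < L, specNorm (W l) ≤ M) (hΔ : ∀ l < L, specNorm (W' l - W l) ≤ δ)
    (hΔF : ∀ l < L, frobNorm (W' l - W l) ≤ δF) (hδ : 0 ≤ δ) (hδF : 0 ≤ δF)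
    (hδM : 2 * L * δ ≤ M) :
    ∀ l ≤ L, frobNorm (Q' l - Q l) ≤ 2 * l * δF * M ^ (l - 1) := by
  have hQb := specNorm_prefix_le hQ0 hQs hM
  refine bound_of_perturbed_recursion hδ hδF hδM (by simp [hQ0, hQ0', frobNorm]) fun l hl => ?_
  have hsplit : Q' (l + 1) - Q (l + 1) = W' l * (Q' l - Q l) + (W' l - W l) * Q l := by
    rw [hQs l hl, hQs' l hl]
    simp only [Matrix.mul_sub, Matrix.sub_mul]
    abel
  have hW' : specNorm (W' l) ≤ M + δ := by
    simpa using (specNorm_add_le (W l) (W' l - W l)).trans (add_le_add (hM l hl) (hΔ l hl))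
  rw [hsplit]
  refine (frobNorm_add_le _ _).trans (add_le_add ?_ ?_)
  · exact (frobNorm_mul_le_specNorm_mul _ _).trans
      (mul_le_mul_of_nonneg_right hW' (frobNorm_nonneg _))
  · exact (frobNorm_mul_le_mul_specNorm _ _).trans
      (mul_le_mul (hΔF l hl) (hQb l hl.le) (specNorm_nonneg _) hδF)

theorem specNorm_frobNorm_update_sub_le {W W' : ∀ l, Matrix (Fin (n (l + 1))) (Fin (n l)) ℝ}
    {P : ∀ l, Matrix (Fin (n L)) (Fin (n l)) ℝ} {Q : ∀ l, Matrix (Fin (n l)) (Fin (n 0)) ℝ}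
    {G : Matrix (Fin (n L)) (Fin (n 0)) ℝ} {c M : ℝ} (hc : 0 ≤ c) (hM : 0 ≤ M)
    (hQb : ∀ l ≤ L, specNorm (Q l) ≤ M ^ l) (hPb : ∀ l ≤ L, specNorm (P l) ≤ M ^ (L - l))
    (hupd : ∀ l < L, W' l = W l - c • ((P (l + 1))ᵀ * G * (Q l)ᵀ)) {l : ℕ} (hl : l < L) :
    specNorm (W' l - W l) ≤ c * M ^ (L - 1) * specNorm G ∧
      frobNorm (W' l - W l) ≤ c * M ^ (L - 1) * frobNorm G := by
  have hP := (specNorm_transpose (P (l + 1))).trans_le (hPb (l + 1) hl)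
  have hQ := (specNorm_transpose (Q l)).trans_le (hQb l hl.le)
  have hpow : M ^ (L - (l + 1)) * M ^ l = M ^ (L - 1) := by rw [← pow_add]; congr 1; omega
  rw [hupd l hl, sub_sub_cancel_left, specNorm_neg, specNorm_smul, frobNorm_neg, frobNorm_smul,
    abs_of_nonneg hc, ← hpow]
  constructor
  · calc c * specNorm ((P (l + 1))ᵀ * G * (Q l)ᵀ)
        ≤ c * (specNorm (P (l + 1))ᵀ * specNorm G * specNorm (Q l)ᵀ) := by
          gcongr
          exact (specNorm_mul_le _ _).trans
            (mul_le_mul_of_nonneg_right (specNorm_mul_le _ _) (specNorm_nonneg _))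
      _ ≤ c * (M ^ (L - (l + 1)) * specNorm G * M ^ l) :=
          mul_le_mul_of_nonneg_left (mul_le_mul (mul_le_mul_of_nonneg_right hP (specNorm_nonneg G))
            hQ (specNorm_nonneg _) (mul_nonneg (pow_nonneg hM _) (specNorm_nonneg G))) hc
      _ = c * (M ^ (L - (l + 1)) * M ^ l) * specNorm G := by ring
  · calc c * frobNorm ((P (l + 1))ᵀ * G * (Q l)ᵀ)
        ≤ c * (specNorm (P (l + 1))ᵀ * frobNorm G * specNorm (Q l)ᵀ) := by
          gcongr
          exact (frobNorm_mul_le_mul_specNorm _ _).trans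
            (mul_le_mul_of_nonneg_right (frobNorm_mul_le_specNorm_mul _ _) (specNorm_nonneg _))
      _ ≤ c * (M ^ (L - (l + 1)) * frobNorm G * M ^ l) :=
          mul_le_mul_of_nonneg_left (mul_le_mul (mul_le_mul_of_nonneg_right hP (frobNorm_nonneg G))
            hQ (specNorm_nonneg _) (mul_nonneg (pow_nonneg hM _) (frobNorm_nonneg G))) hc
      _ = c * (M ^ (L - (l + 1)) * M ^ l) * frobNorm G := by ring

theorem higher_order_term_eq {R : Type*} [CommRing R]
    {W W' : ∀ l, Matrix (Fin (n (l + 1))) (Fin (n l)) R}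
    {P : ∀ l, Matrix (Fin (n L)) (Fin (n l)) R} {Q Q' : ∀ l, Matrix (Fin (n l)) (Fin (n 0)) R}
    {G : Matrix (Fin (n L)) (Fin (n 0)) R} {c : R}
    (hPL : P L = 1) (hPs : ∀ l < L, P l = P (l + 1) * W l)
    (hQ0 : Q 0 = 1) (hQs : ∀ l < L, Q (l + 1) = W l * Q l)
    (hQ0' : Q' 0 = 1) (hQs' : ∀ l < L, Q' (l + 1) = W' l * Q' l)
    (hupd : ∀ l < L, W' l = W l - c • ((P (l + 1))ᵀ * G * (Q l)ᵀ)) :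
    (Q' L - Q L) + c • ∑ l ∈ Finset.range L, P (l + 1) * (P (l + 1))ᵀ * G * (Q l)ᵀ * Q l =
      ∑ l ∈ Finset.range L, P (l + 1) * (W' l - W l) * (Q' l - Q l) := by
  rw [prefix_sub_prefix_eq_sum W W' P Q Q' hPL hPs hQ0 hQs hQ0' hQs', Finset.smul_sum,
    ← Finset.sum_add_distrib]
  refine Finset.sum_congr rfl fun l hl => ?_
  rw [hupd l (Finset.mem_range.1 hl), sub_sub_cancel_left]
  simp only [Matrix.mul_sub, Matrix.mul_neg, Matrix.neg_mul, Matrix.mul_smul, Matrix.smul_mul,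
    Matrix.mul_assoc]
  abel

theorem frobNorm_sum_suffix_mul_mul_le {P : ∀ l, Matrix (Fin (n L)) (Fin (n l)) ℝ}
    {Δ : ∀ l, Matrix (Fin (n (l + 1))) (Fin (n l)) ℝ} {D : ∀ l, Matrix (Fin (n l)) (Fin (n 0)) ℝ}
    {M δ δF : ℝ} (hM : 0 ≤ M) (hδ : 0 ≤ δ) (hδF : 0 ≤ δF)
    (hPb : ∀ l ≤ L, specNorm (P l) ≤ M ^ (L - l)) (hΔ : ∀ l < L, specNorm (Δ l) ≤ δ)
    (hD : ∀ l < L, frobNorm (D l) ≤ 2 * l * δF * M ^ (l - 1)) :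
    frobNorm (∑ l ∈ Finset.range L, P (l + 1) * Δ l * D l) ≤ 2 * L ^ 2 * δ * δF * M ^ (L - 2) := by
  have hterm : ∀ l ∈ Finset.range L,
      frobNorm (P (l + 1) * Δ l * D l) ≤ 2 * L * δ * δF * M ^ (L - 2) := fun l hl => by
    have hl : l < L := Finset.mem_range.1 hl
    calc frobNorm (P (l + 1) * Δ l * D l)
        ≤ specNorm (P (l + 1)) * (specNorm (Δ l) * frobNorm (D l)) := by
          rw [Matrix.mul_assoc]
          exact (frobNorm_mul_le_specNorm_mul _ _).trans (mul_le_mul_of_nonneg_left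
            (frobNorm_mul_le_specNorm_mul _ _) (specNorm_nonneg _))
      _ ≤ M ^ (L - (l + 1)) * (δ * (2 * l * δF * M ^ (l - 1))) :=
          mul_le_mul (hPb _ hl) (mul_le_mul (hΔ l hl) (hD l hl) (frobNorm_nonneg _) hδ)
            (mul_nonneg (specNorm_nonneg _) (frobNorm_nonneg _)) (pow_nonneg hM _)
      _ ≤ 2 * L * δ * δF * M ^ (L - 2) := by
          rcases l with _ | k
          · simp only [CharP.cast_eq_zero, mul_zero, zero_mul]
            positivity
          · have hpow : M ^ (L - (k + 1 + 1)) * M ^ (k + 1 - 1) = M ^ (L - 2) := by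
              rw [← pow_add]; congr 1; omega
            have hkL : ((k + 1 : ℕ) : ℝ) ≤ L := by exact_mod_cast hl.le
            calc M ^ (L - (k + 1 + 1)) * (δ * (2 * (k + 1 : ℕ) * δF * M ^ (k + 1 - 1)))
                = 2 * (k + 1 : ℕ) * δ * δF * M ^ (L - 2) := by rw [← hpow]; ring
              _ ≤ 2 * L * δ * δF * M ^ (L - 2) := by gcongr
  calc frobNorm (∑ l ∈ Finset.range L, P (l + 1) * Δ l * D l)
      ≤ ∑ l ∈ Finset.range L, frobNorm (P (l + 1) * Δ l * D l) := frobNorm_sum_le _ _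
    _ ≤ ∑ _l ∈ Finset.range L, 2 * L * δ * δF * M ^ (L - 2) := Finset.sum_le_sum hterm
    _ = 2 * L ^ 2 * δ * δF * M ^ (L - 2) := by
        rw [Finset.sum_const, Finset.card_range, nsmul_eq_mul]; ring

end DeepMatrixFactorization

-- `W l` is the paper's `W_{l+1}`, so `Q l = W_{1:l}`, `P l = W_{l+1:L}`, and `W'` is the updated
-- family of factors.
/-- Bound on the higher-order term `E(i)` of one preconditioned gradient step in
deep matrix factorization. `W l` are the current factors, `W' l` the factors after
the step, `Q l = W_l ⋯ W_1` (so `Q L` is the full product), `P l = W_L ⋯ W_{l+1}`;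
the loss is `ℓ(W) = ½‖W − W*‖_F²` with gradient `Q L − W*`. -/
theorem stmt4 (L : ℕ) (hL : 2 ≤ L) (n : ℕ → ℕ)
    (W W' : ∀ l : ℕ, Matrix (Fin (n (l + 1))) (Fin (n l)) ℝ)
    (Wstar : Matrix (Fin (n L)) (Fin (n 0)) ℝ)
    (Q Q' : ∀ l : ℕ, Matrix (Fin (n l)) (Fin (n 0)) ℝ)
    (P : ∀ l : ℕ, Matrix (Fin (n L)) (Fin (n l)) ℝ)
    (hQ0 : Q 0 = 1) (hQs : ∀ l < L, Q (l + 1) = W l * Q l)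
    (hQ0' : Q' 0 = 1) (hQs' : ∀ l < L, Q' (l + 1) = W' l * Q' l)
    (hPL : P L = 1) (hPs : ∀ l < L, P l = P (l + 1) * W l)
    (η a Λ M B : ℝ) (hη0 : 0 < η) (ha : 0 < a) (haΛ : a ≤ Λ)
    (hupd : ∀ l < L, W' l = W l - (η * a) • ((P (l + 1))ᵀ * (Q L - Wstar) * (Q l)ᵀ))
    (hM : ∀ l < L, specNorm (W l) ≤ M)
    (hB : specNorm (Q L - Wstar) ≤ B)
    (hηs : η ≤ 1 / (2 * (L : ℝ) * Λ * M ^ (L - 2) * B)) :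
    frobNorm ((Q' L - Q L) +
        (η * a) • ∑ l ∈ Finset.range L,
          P (l + 1) * (P (l + 1))ᵀ * (Q L - Wstar) * (Q l)ᵀ * Q l)
      ≤ 2 * η ^ 2 * (L : ℝ) ^ 2 * Λ ^ 2 * M ^ (3 * L - 4) * B * frobNorm (Q L - Wstar) := by
  set G := Q L - Wstar
  have hM0 : 0 ≤ M := (specNorm_nonneg _).trans (hM 0 (by omega))
  have hB0 : 0 ≤ B := (specNorm_nonneg G).trans hB
  have hc : 0 ≤ η * a := by positivity
  have hδF : 0 ≤ η * a * M ^ (L - 1) * frobNorm G := mul_nonneg (by positivity) (frobNorm_nonneg G)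
  have hQb := specNorm_prefix_le hQ0 hQs hM
  have hPb := specNorm_suffix_le hPL hPs hM
  have hΔ := fun l (hl : l < L) => specNorm_frobNorm_update_sub_le hc hM0 hQb hPb hupd hl
  have hΔs : ∀ l < L, specNorm (W' l - W l) ≤ η * a * M ^ (L - 1) * B :=
    fun l hl => (hΔ l hl).1.trans (by gcongr)
  have hD := frobNorm_prefix_sub_le hQ0 hQs hQ0' hQs' hM hΔs (fun l hl => (hΔ l hl).2)
    (by positivity) hδF (two_mul_increment_bound_le hL hη0 haΛ hM0 hB0 hηs)
  rw [higher_order_term_eq hPL hPs hQ0 hQs hQ0' hQs' hupd]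
  calc _ ≤ 2 * L ^ 2 * (η * a * M ^ (L - 1) * B) * (η * a * M ^ (L - 1) * frobNorm G)
        * M ^ (L - 2) :=
        frobNorm_sum_suffix_mul_mul_le hM0 (by positivity) hδF hPb hΔs
          fun l hl => hD l hl.le
    _ = 2 * η ^ 2 * L ^ 2 * a ^ 2 * M ^ (L - 1 + (L - 1) + (L - 2)) * B * frobNorm G := by
        rw [pow_add, pow_add]; ring
    _ ≤ 2 * η ^ 2 * L ^ 2 * Λ ^ 2 * M ^ (3 * L - 4) * B * frobNorm G := by
        rw [show L - 1 + (L - 1) + (L - 2) = 3 * L - 4 by omega]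
        gcongr
        exact frobNorm_nonneg G
end

section
/- Let W̃, W(1), …, W(t) be successive product matrices of a deep matrix factorization in ℝ^{n_L×n_0} with ‖∇ℓ(W̃)‖_F ≤ τ, where ℓ(W) = (1/2)‖W − W*‖_F², and fix σ > 0, η > 0, r > 0, Λ ≥ 1, M ≥ 1, B ≥ 1, L ≥ 2. Suppose: (i) for all i ∈ {1,…,t−1}, ℓ(W(i+1)) − ℓ(W(i)) ≤ −(1/2)·σ^{(2L−2)/L}·η·‖∇ℓ(W(i))‖_F² and ‖W(i+1) − W(i)‖_F² ≤ 8η²L⁴Λ⁴M^{6L−8}B²·‖∇ℓ(W(i))‖_F²; (ii) the first step satisfies ‖W(1) − W̃‖_F² ≤ 2(r²L²Λ²M^{4L−4} + 4r⁴L⁴Λ⁴M^{6L−8}B²)τ² with 4L²Λ²M^{2L−4}B² ≥ 1 and r ≤ 1/(2LΛM^{L−2}B), and ℓ(W(1)) − ℓ(W̃) ≤ 8r²L⁴Λ⁴M^{6L−8}B²τ²; (iii) ℓ(W(t)) − ℓ(W̃) ≥ −ℓ_thresh. Then ‖W(t) − W̃‖_F² ≤ t·η·σ^{(2−2L)/L}·H·(ℓ_thresh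 + Q) + 4Q, where H = 32L⁴Λ⁴M^{6L−8}B² and Q = 8r²L⁴Λ⁴M^{6L−8}B²τ². -/
/-!
Write `g i = ‖W(i) − W*‖_F²` and `s = σ^{(2L−2)/L}`. Summing the descent inequalities (i)
telescopes to `(sη/2) ∑_{1≤i<t} g i ≤ ℓ(W(1)) − ℓ(W(t)) ≤ ℓ_thresh + Q` by (ii) and (iii), while
the polygon inequality and Cauchy–Schwarz bound `‖W(t) − W(1)‖_F²` by `t − 1` times the sum of
the squared steps, hence by `(t − 1)·8η²L⁴Λ⁴M^{6L−8}B² ∑ g i`. The first step costs at most `2Q`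
because `r · 2LΛM^{L−2}B ≤ 1`, and `‖a + b‖² ≤ 2‖a‖² + 2‖b‖²` combines the two pieces.
-/

open scoped BigOperators
open Matrix

open Finset

theorem Finset.sum_Ico_le_sub_of_add_le {α : Type*} [AddCommGroup α] [PartialOrder α]
    [IsOrderedAddMonoid α] {f g : ℕ → α} {m n : ℕ} (hmn : m ≤ n)
    (h : ∀ i ∈ Ico m n, f (i + 1) + g i ≤ f i) :
    ∑ i ∈ Ico m n, g i ≤ f m - f n := by
  rw [← neg_sub, ← sum_Ico_sub f hmn, ← sum_neg_distrib]
  exact sum_le_sum fun i hi => by rw [neg_sub]; exact le_sub_iff_add_le'.mpr (h i hi)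

section Descent

variable {E : Type*} [PseudoMetricSpace E]

theorem dist_sq_le_card_mul_sum_dist_sq (x : ℕ → E) {m n : ℕ} (hmn : m ≤ n) :
    dist (x m) (x n) ^ 2 ≤ (n - m : ℕ) * ∑ i ∈ Ico m n, dist (x i) (x (i + 1)) ^ 2 := by
  calc dist (x m) (x n) ^ 2 ≤ (∑ i ∈ Ico m n, dist (x i) (x (i + 1))) ^ 2 := by
        gcongr; exact dist_le_Ico_sum_dist x hmn
    _ ≤ _ := by simpa using sq_sum_le_card_mul_sum_sq (s := Ico m n)

theorem mul_dist_sq_le_of_descent (x : ℕ → E) (f g : ℕ → ℝ) {m n : ℕ} {c K : ℝ}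
    (hmn : m ≤ n) (hc : 0 ≤ c) (hK : 0 ≤ K)
    (hdec : ∀ i ∈ Ico m n, f (i + 1) + c * g i ≤ f i)
    (hstep : ∀ i ∈ Ico m n, dist (x i) (x (i + 1)) ^ 2 ≤ K * g i) :
    c * dist (x m) (x n) ^ 2 ≤ (n - m : ℕ) * K * (f m - f n) := by
  have hsum : ∑ i ∈ Ico m n, dist (x i) (x (i + 1)) ^ 2 ≤ K * ∑ i ∈ Ico m n, g i := by
    rw [mul_sum]; exact sum_le_sum hstep
  have hg : c * ∑ i ∈ Ico m n, g i ≤ f m - f n := by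
    rw [mul_sum]; exact sum_Ico_le_sub_of_add_le hmn hdec
  calc c * dist (x m) (x n) ^ 2
      ≤ c * ((n - m : ℕ) * (K * ∑ i ∈ Ico m n, g i)) := by
        gcongr
        exact (dist_sq_le_card_mul_sum_dist_sq x hmn).trans (by gcongr)
    _ = (n - m : ℕ) * K * (c * ∑ i ∈ Ico m n, g i) := by ring
    _ ≤ (n - m : ℕ) * K * (f m - f n) := by gcongr

end Descent

section Frobenius

variable {ι κ : Type*} [Fintype ι] [Fintype κ]

attribute [local instance] Matrix.frobeniusNormedAddCommGroup

theorem frobNorm_eq_norm (A : Matrix ι κ ℝ) : frobNorm A = ‖A‖ := by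
  simp [frobNorm, Matrix.frobenius_norm_def, Real.sqrt_eq_rpow]

theorem frobNorm_sub_sq_le (A B C : Matrix ι κ ℝ) :
    frobNorm (A - C) ^ 2 ≤ 2 * (frobNorm (A - B) ^ 2 + frobNorm (B - C) ^ 2) := by
  simp only [frobNorm_eq_norm]
  exact (pow_le_pow_left₀ (norm_nonneg _) (norm_sub_le_norm_sub_add_norm_sub A B C) 2).trans
    add_sq_le

theorem mul_frobNorm_sub_sq_le_of_descent (W : ℕ → Matrix ι κ ℝ) (f g : ℕ → ℝ) {m n : ℕ}
    {c K : ℝ} (hmn : m ≤ n) (hc : 0 ≤ c) (hK : 0 ≤ K)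
    (hdec : ∀ i ∈ Ico m n, f (i + 1) + c * g i ≤ f i)
    (hstep : ∀ i ∈ Ico m n, frobNorm (W (i + 1) - W i) ^ 2 ≤ K * g i) :
    c * frobNorm (W n - W m) ^ 2 ≤ (n - m : ℕ) * K * (f m - f n) := by
  have := mul_dist_sq_le_of_descent W f g hmn hc hK hdec fun i hi => by
    simpa only [dist_comm (W i), dist_eq_norm, frobNorm_eq_norm] using hstep i hi
  rwa [dist_comm, dist_eq_norm, ← frobNorm_eq_norm] at this

end Frobenius

theorem first_step_coeff_le {L : ℕ} (hL : 2 ≤ L) {r Λ M B : ℝ} (hr : 0 < r) (hM : 0 ≤ M)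
    (hconst : (1 : ℝ) ≤ 4 * (L : ℝ) ^ 2 * Λ ^ 2 * M ^ (2 * L - 4) * B ^ 2)
    (hrs : r ≤ 1 / (2 * (L : ℝ) * Λ * M ^ (L - 2) * B)) :
    r ^ 2 * (L : ℝ) ^ 2 * Λ ^ 2 * M ^ (4 * L - 4)
        + 4 * r ^ 4 * (L : ℝ) ^ 4 * Λ ^ 4 * M ^ (6 * L - 8) * B ^ 2
      ≤ 8 * r ^ 2 * (L : ℝ) ^ 4 * Λ ^ 4 * M ^ (6 * L - 8) * B ^ 2 := by
  set X := r ^ 2 * (L : ℝ) ^ 2 * Λ ^ 2 * M ^ (4 * L - 4)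
  set Y := 4 * (L : ℝ) ^ 2 * Λ ^ 2 * M ^ (2 * L - 4) * B ^ 2
  set c := 2 * (L : ℝ) * Λ * M ^ (L - 2) * B
  have hc : 0 < c := by
    by_contra! hc
    linarith [one_div_nonpos.mpr hc]
  have hrc : r * c ≤ 1 := by rwa [le_div_iff₀ hc] at hrs
  have hY : r ^ 2 * Y ≤ 1 := by
    have hcY : c ^ 2 = Y := by
      simp only [c, Y, mul_pow, ← pow_mul]
      rw [show (L - 2) * 2 = 2 * L - 4 by omega]; ring
    rw [← hcY, ← mul_pow]
    exact pow_le_one₀ (by positivity) hrc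
  have hM6 : M ^ (6 * L - 8) = M ^ (4 * L - 4) * M ^ (2 * L - 4) := by
    rw [← pow_add]; congr 1; omega
  have hX : 0 ≤ X := by positivity
  calc X + 4 * r ^ 4 * (L : ℝ) ^ 4 * Λ ^ 4 * M ^ (6 * L - 8) * B ^ 2
      = X + X * (r ^ 2 * Y) := by rw [hM6]; ring
    _ ≤ 2 * X * Y := by nlinarith [mul_le_mul_of_nonneg_left hY hX]
    _ = 8 * r ^ 2 * (L : ℝ) ^ 4 * Λ ^ 4 * M ^ (6 * L - 8) * B ^ 2 := by rw [hM6]; ring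

theorem stmt9_general (L : ℕ) (hL : 2 ≤ L) (p q : ℕ)
    (Wstar Wtil : Matrix (Fin p) (Fin q) ℝ) (Wseq : ℕ → Matrix (Fin p) (Fin q) ℝ)
    (σ η r Λ M B τ ℓthresh : ℝ)
    (hσ : 0 < σ) (hη : 0 < η) (hr : 0 < r) (hM : 1 ≤ M)
    (t : ℕ) (ht : 1 ≤ t)
    (hdec : ∀ i, 1 ≤ i → i < t →
      (1 / 2) * frobNorm (Wseq (i + 1) - Wstar) ^ 2
          - (1 / 2) * frobNorm (Wseq i - Wstar) ^ 2
        ≤ -(1 / 2) * σ ^ ((2 * (L : ℝ) - 2) / (L : ℝ)) * η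
            * frobNorm (Wseq i - Wstar) ^ 2)
    (hstep : ∀ i, 1 ≤ i → i < t →
      frobNorm (Wseq (i + 1) - Wseq i) ^ 2
        ≤ 8 * η ^ 2 * (L : ℝ) ^ 4 * Λ ^ 4 * M ^ (6 * L - 8) * B ^ 2
            * frobNorm (Wseq i - Wstar) ^ 2)
    (hfirst : frobNorm (Wseq 1 - Wtil) ^ 2
        ≤ 2 * (r ^ 2 * (L : ℝ) ^ 2 * Λ ^ 2 * M ^ (4 * L - 4)
            + 4 * r ^ 4 * (L : ℝ) ^ 4 * Λ ^ 4 * M ^ (6 * L - 8) * B ^ 2) * τ ^ 2)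
    (hconst : (1 : ℝ) ≤ 4 * (L : ℝ) ^ 2 * Λ ^ 2 * M ^ (2 * L - 4) * B ^ 2)
    (hrs : r ≤ 1 / (2 * (L : ℝ) * Λ * M ^ (L - 2) * B))
    (hfirstf : (1 / 2) * frobNorm (Wseq 1 - Wstar) ^ 2
          - (1 / 2) * frobNorm (Wtil - Wstar) ^ 2
        ≤ 8 * r ^ 2 * (L : ℝ) ^ 4 * Λ ^ 4 * M ^ (6 * L - 8) * B ^ 2 * τ ^ 2)
    (hlow : -ℓthresh ≤ (1 / 2) * frobNorm (Wseq t - Wstar) ^ 2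
          - (1 / 2) * frobNorm (Wtil - Wstar) ^ 2) :
    frobNorm (Wseq t - Wtil) ^ 2
      ≤ (t : ℝ) * η * σ ^ ((2 - 2 * (L : ℝ)) / (L : ℝ))
          * (32 * (L : ℝ) ^ 4 * Λ ^ 4 * M ^ (6 * L - 8) * B ^ 2)
          * (ℓthresh
            + 8 * r ^ 2 * (L : ℝ) ^ 4 * Λ ^ 4 * M ^ (6 * L - 8) * B ^ 2 * τ ^ 2)
        + 4 * (8 * r ^ 2 * (L : ℝ) ^ 4 * Λ ^ 4 * M ^ (6 * L - 8) * B ^ 2 * τ ^ 2) := by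
  set s := σ ^ ((2 * (L : ℝ) - 2) / (L : ℝ))
  set P := (L : ℝ) ^ 4 * Λ ^ 4 * M ^ (6 * L - 8) * B ^ 2
  set Q := 8 * r ^ 2 * (L : ℝ) ^ 4 * Λ ^ 4 * M ^ (6 * L - 8) * B ^ 2 * τ ^ 2
  set g := fun i => frobNorm (Wseq i - Wstar) ^ 2
  have hs : 0 < s := Real.rpow_pos_of_pos hσ _
  have hP : 0 ≤ P := by positivity
  have hs_inv : σ ^ ((2 - 2 * (L : ℝ)) / (L : ℝ)) = s⁻¹ := by
    rw [← Real.rpow_neg hσ.le]; congr 1; ring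
  have hdesc : ∀ i ∈ Ico 1 t, g (i + 1) / 2 + s * η / 2 * g i ≤ g i / 2 := fun i hi => by
    obtain ⟨hi1, hit⟩ := mem_Ico.mp hi
    linarith [hdec i hi1 hit]
  have hpath := mul_frobNorm_sub_sq_le_of_descent Wseq (fun i => g i / 2) g ht
    (by positivity) (by positivity : 0 ≤ 8 * η ^ 2 * P) hdesc
    fun i hi => (hstep i (mem_Ico.mp hi).1 (mem_Ico.mp hi).2).trans_eq (by ring)
  have hloss : g 1 / 2 - g t / 2 ≤ ℓthresh + Q := by linarith
  have hloss_nonneg : 0 ≤ ℓthresh + Q := by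
    have := sum_Ico_le_sub_of_add_le (f := fun i => g i / 2) ht hdesc
    have : 0 ≤ ∑ i ∈ Ico 1 t, s * η / 2 * g i := sum_nonneg fun i _ => by positivity
    linarith
  have hstart : frobNorm (Wseq 1 - Wtil) ^ 2 ≤ 2 * Q := by
    have hcoeff := first_step_coeff_le hL hr (by linarith) hconst hrs
    calc _ ≤ _ := hfirst
      _ ≤ 2 * (8 * r ^ 2 * (L : ℝ) ^ 4 * Λ ^ 4 * M ^ (6 * L - 8) * B ^ 2) * τ ^ 2 := by gcongr
      _ = 2 * Q := by ring
  have htri := frobNorm_sub_sq_le (Wseq t) (Wseq 1) Wtil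
  have hpath' : frobNorm (Wseq t - Wseq 1) ^ 2
      ≤ (t - 1 : ℕ) * (16 * η * P * s⁻¹) * (ℓthresh + Q) := by
    rw [← mul_le_mul_iff_of_pos_left (by positivity : 0 < s * η / 2)]
    calc _ ≤ _ := hpath
      _ ≤ (t - 1 : ℕ) * (8 * η ^ 2 * P) * (ℓthresh + Q) := by gcongr
      _ = _ := by field_simp; ring
  have ht' : ((t - 1 : ℕ) : ℝ) ≤ t := by exact_mod_cast Nat.sub_le t 1
  rw [hs_inv]
  calc _ ≤ 2 * (frobNorm (Wseq t - Wseq 1) ^ 2 + frobNorm (Wseq 1 - Wtil) ^ 2) := htri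
    _ ≤ 2 * ((t - 1 : ℕ) * (16 * η * P * s⁻¹) * (ℓthresh + Q) + 2 * Q) := by gcongr
    _ ≤ 2 * (t * (16 * η * P * s⁻¹) * (ℓthresh + Q) + 2 * Q) := by gcongr
    _ = _ := by ring

/-- Distance bound (Lemma A4) for the product matrices `W̃, W(1), …, W(t)` of a deep
matrix factorization with loss `ℓ(W) = ½‖W − W*‖_F²` and gradient `∇ℓ(W) = W − W*`,
assuming per-step decrease and step-size bounds (i), a first-step bound (ii), and
a lower bound on the total decrease (iii). Here `H = 32L⁴Λ⁴M^{6L−8}B²` and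
`Q = 8r²L⁴Λ⁴M^{6L−8}B²τ²` are written out explicitly. -/
theorem stmt9 (L : ℕ) (hL : 2 ≤ L) (p q : ℕ)
    (Wstar Wtil : Matrix (Fin p) (Fin q) ℝ) (Wseq : ℕ → Matrix (Fin p) (Fin q) ℝ)
    (σ η r Λ M B τ ℓthresh : ℝ)
    (hσ : 0 < σ) (hη : 0 < η) (hr : 0 < r) (hΛ : 1 ≤ Λ) (hM : 1 ≤ M) (hB : 1 ≤ B)
    (t : ℕ) (ht : 1 ≤ t)
    (hgrad : frobNorm (Wtil - Wstar) ≤ τ)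
    (hdec : ∀ i, 1 ≤ i → i < t →
      (1 / 2) * frobNorm (Wseq (i + 1) - Wstar) ^ 2
          - (1 / 2) * frobNorm (Wseq i - Wstar) ^ 2
        ≤ -(1 / 2) * σ ^ ((2 * (L : ℝ) - 2) / (L : ℝ)) * η
            * frobNorm (Wseq i - Wstar) ^ 2)
    (hstep : ∀ i, 1 ≤ i → i < t →
      frobNorm (Wseq (i + 1) - Wseq i) ^ 2
        ≤ 8 * η ^ 2 * (L : ℝ) ^ 4 * Λ ^ 4 * M ^ (6 * L - 8) * B ^ 2
            * frobNorm (Wseq i - Wstar) ^ 2)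
    (hfirst : frobNorm (Wseq 1 - Wtil) ^ 2
        ≤ 2 * (r ^ 2 * (L : ℝ) ^ 2 * Λ ^ 2 * M ^ (4 * L - 4)
            + 4 * r ^ 4 * (L : ℝ) ^ 4 * Λ ^ 4 * M ^ (6 * L - 8) * B ^ 2) * τ ^ 2)
    (hconst : (1 : ℝ) ≤ 4 * (L : ℝ) ^ 2 * Λ ^ 2 * M ^ (2 * L - 4) * B ^ 2)
    (hrs : r ≤ 1 / (2 * (L : ℝ) * Λ * M ^ (L - 2) * B))
    (hfirstf : (1 / 2) * frobNorm (Wseq 1 - Wstar) ^ 2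
          - (1 / 2) * frobNorm (Wtil - Wstar) ^ 2
        ≤ 8 * r ^ 2 * (L : ℝ) ^ 4 * Λ ^ 4 * M ^ (6 * L - 8) * B ^ 2 * τ ^ 2)
    (hlow : -ℓthresh ≤ (1 / 2) * frobNorm (Wseq t - Wstar) ^ 2
          - (1 / 2) * frobNorm (Wtil - Wstar) ^ 2) :
    frobNorm (Wseq t - Wtil) ^ 2
      ≤ (t : ℝ) * η * σ ^ ((2 - 2 * (L : ℝ)) / (L : ℝ))
          * (32 * (L : ℝ) ^ 4 * Λ ^ 4 * M ^ (6 * L - 8) * B ^ 2)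
          * (ℓthresh
            + 8 * r ^ 2 * (L : ℝ) ^ 4 * Λ ^ 4 * M ^ (6 * L - 8) * B ^ 2 * τ ^ 2)
        + 4 * (8 * r ^ 2 * (L : ℝ) ^ 4 * Λ ^ 4 * M ^ (6 * L - 8) * B ^ 2 * τ ^ 2) :=
  stmt9_general L hL p q Wstar Wtil Wseq σ η r Λ M B τ ℓthresh hσ hη hr hM t ht hdec hstep hfirst
    hconst hrs hfirstf hlow
end

section
/- Let Â ∈ ℝ^{n×n} be a diagonal matrix with strictly positive diagonal entries, H ∈ ℝ^{n×n} a symmetric matrix with λ_min( Â^{1/2} H Â^{1/2} ) = −γ for some γ > 0, and let η > 0. Then for every matrix G ∈ ℝ^{n×m} and every natural number t, ‖(I − η Â H)^t Â G‖_F² ≥ (1 + ηγ)^{2t} · λ_min( Â G Gᵀ Âᵀ ). -/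
open scoped BigOperators
open Matrix

/-- Smallest eigenvalue (Rayleigh quotient infimum) of a symmetric real matrix. -/
noncomputable def lambdaMin {n : Type*} [Fintype n] (H : Matrix n n ℝ) : ℝ :=
  sInf {c | ∃ x : n → ℝ, (∑ i, x i ^ 2) = 1 ∧ c = dotProduct x (H.mulVec x)}

/-! Let `S = Â^{1/2} = diagonal √d`. The symmetric matrix `S H S` has an eigenvector `v` with
eigenvalue `μ ≤ λ_min(S H S) = -γ`. Since `Â H = S⁻¹ (S H S) S`, the vector `z = S⁻¹ v` is a left
eigenvector of `Â H`, hence of `(I - η Â H)^t` with eigenvalue `(1 - η μ)^t`, and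
`(1 - η μ)^2 ≥ (1 + η γ)^2`. Testing `M = (I - η Â H)^t Â G` against `z` by Cauchy–Schwarz gives
`‖z‖² ‖M‖_F² ≥ ‖zᵀ M‖² = (1 - η μ)^{2t} ‖zᵀ Â G‖² ≥ (1 - η μ)^{2t} λ_min(Â G Gᵀ Â) ‖z‖²`. -/

section

variable {R n : Type*} [CommRing R] [Fintype n] [DecidableEq n]

lemma vecMul_one_sub_smul_eq_smul {N : Matrix n n R} {z : n → R} {μ : R} (h : z ᵥ* N = μ • z)
    (η : R) : z ᵥ* (1 - η • N) = (1 - η * μ) • z := by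
  rw [vecMul_sub, vecMul_one, vecMul_smul, h, smul_smul, sub_smul, one_smul]

lemma vecMul_pow_eq_smul {N : Matrix n n R} {z : n → R} {c : R} (h : z ᵥ* N = c • z) (t : ℕ) :
    z ᵥ* N ^ t = c ^ t • z := by
  induction t with
  | zero => simp
  | succ k ih => rw [pow_succ, ← vecMul_vecMul, ih, smul_vecMul, h, smul_smul, pow_succ]

end

section

variable {n m : Type*} [Fintype n] [Fintype m]

lemma frobNorm_sq (A : Matrix n m ℝ) : frobNorm A ^ 2 = ∑ i, ∑ j, A i j ^ 2 :=
  Real.sq_sqrt (by positivity)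

lemma sum_sq_vecMul_le (x : n → ℝ) (C : Matrix n m ℝ) :
    ∑ j, (x ᵥ* C) j ^ 2 ≤ (∑ i, x i ^ 2) * ∑ i, ∑ j, C i j ^ 2 :=
  calc ∑ j, (x ᵥ* C) j ^ 2 = ∑ j, (∑ i, x i * C i j) ^ 2 := rfl
    _ ≤ ∑ j, (∑ i, x i ^ 2) * ∑ i, C i j ^ 2 :=
      Finset.sum_le_sum fun j _ => Finset.sum_mul_sq_le_sq_mul_sq _ _ _
    _ = (∑ i, x i ^ 2) * ∑ i, ∑ j, C i j ^ 2 := by rw [← Finset.mul_sum, Finset.sum_comm]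

lemma dotProduct_self_eq_sum_sq (x : n → ℝ) : x ⬝ᵥ x = ∑ i, x i ^ 2 := by
  simp only [dotProduct, sq]

lemma dotProduct_mul_transpose_mulVec (B : Matrix n m ℝ) (x : n → ℝ) :
    x ⬝ᵥ (B * Bᵀ) *ᵥ x = ∑ j, (x ᵥ* B) j ^ 2 := by
  rw [← mulVec_mulVec, dotProduct_mulVec, mulVec_transpose, dotProduct_self_eq_sum_sq]

lemma lambdaMin_of_isEmpty [IsEmpty n] (A : Matrix n n ℝ) : lambdaMin A = 0 := by
  simp [lambdaMin]

lemma nonempty_of_lambdaMin_ne_zero {A : Matrix n n ℝ} (hA : lambdaMin A ≠ 0) : Nonempty n := by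
  by_contra h
  rw [not_nonempty_iff] at h
  exact hA (lambdaMin_of_isEmpty A)

lemma le_lambdaMin [Nonempty n] {A : Matrix n n ℝ} {c : ℝ}
    (h : ∀ x : n → ℝ, ∑ i, x i ^ 2 = 1 → c ≤ x ⬝ᵥ A *ᵥ x) : c ≤ lambdaMin A := by
  classical
  refine le_csInf ⟨_, Pi.single (Classical.arbitrary n) 1, ?_, rfl⟩ ?_
  · simp [Pi.single_apply, ite_pow]
  · rintro _ ⟨x, hx, rfl⟩
    exact h x hx

lemma zero_mem_lowerBounds_rayleigh_mul_transpose (B : Matrix n m ℝ) :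
    0 ∈ lowerBounds {c | ∃ x : n → ℝ, ∑ i, x i ^ 2 = 1 ∧ c = x ⬝ᵥ (B * Bᵀ) *ᵥ x} := by
  rintro _ ⟨x, -, rfl⟩
  rw [dotProduct_mul_transpose_mulVec]
  positivity

lemma lambdaMin_mul_transpose_nonneg (B : Matrix n m ℝ) : 0 ≤ lambdaMin (B * Bᵀ) :=
  Real.sInf_nonneg (zero_mem_lowerBounds_rayleigh_mul_transpose B)

lemma lambdaMin_mul_transpose_mul_sum_sq_le (B : Matrix n m ℝ) (x : n → ℝ) :
    lambdaMin (B * Bᵀ) * ∑ i, x i ^ 2 ≤ ∑ j, (x ᵥ* B) j ^ 2 := by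
  set s := ∑ i, x i ^ 2
  rcases (show 0 ≤ s by positivity).eq_or_lt with hs | hs
  · rw [← hs, mul_zero]
    positivity
  have hu : ∑ i, ((√s)⁻¹ • x) i ^ 2 = 1 := by
    simp only [Pi.smul_apply, smul_eq_mul, mul_pow, ← Finset.mul_sum, inv_pow, Real.sq_sqrt hs.le]
    exact inv_mul_cancel₀ hs.ne'
  have hle : lambdaMin (B * Bᵀ) ≤ ∑ j, (((√s)⁻¹ • x) ᵥ* B) j ^ 2 := by
    rw [← dotProduct_mul_transpose_mulVec]
    exact csInf_le ⟨0, zero_mem_lowerBounds_rayleigh_mul_transpose B⟩ ⟨_, hu, rfl⟩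
  simp only [smul_vecMul, Pi.smul_apply, smul_eq_mul, mul_pow, ← Finset.mul_sum, inv_pow,
    Real.sq_sqrt hs.le] at hle
  rwa [le_inv_mul_iff₀ hs, mul_comm] at hle

open scoped MatrixOrder in
lemma Matrix.IsHermitian.mul_sum_sq_le_dotProduct_mulVec [DecidableEq n] {A : Matrix n n ℝ}
    (hA : A.IsHermitian) {μ : ℝ} (hμ : ∀ i, μ ≤ hA.eigenvalues i) (x : n → ℝ) :
    μ * ∑ i, x i ^ 2 ≤ x ⬝ᵥ A *ᵥ x := by
  have hle : algebraMap ℝ (Matrix n n ℝ) μ ≤ A := by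
    rw [algebraMap_le_iff_le_spectrum hA.isSelfAdjoint, hA.spectrum_real_eq_range_eigenvalues]
    rintro _ ⟨i, rfl⟩
    exact hμ i
  have := (Matrix.le_iff.mp hle).dotProduct_mulVec_nonneg x
  rw [Algebra.algebraMap_eq_smul_one, sub_mulVec, dotProduct_sub, smul_mulVec, one_mulVec,
    dotProduct_smul, star_trivial, smul_eq_mul, dotProduct_self_eq_sum_sq] at this
  linarith

lemma Matrix.IsHermitian.exists_mulVec_eq_smul_le_lambdaMin [Nonempty n] [DecidableEq n]
    {A : Matrix n n ℝ} (hA : A.IsHermitian) :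
    ∃ μ v, v ≠ 0 ∧ A *ᵥ v = μ • v ∧ μ ≤ lambdaMin A := by
  obtain ⟨i₀, -, hi₀⟩ := Finset.univ.exists_min_image hA.eigenvalues Finset.univ_nonempty
  refine ⟨_, _, ?_, hA.mulVec_eigenvectorBasis i₀, le_lambdaMin fun x hx => ?_⟩
  · simpa using hA.eigenvectorBasis.orthonormal.ne_zero i₀
  · simpa [hx] using hA.mul_sum_sq_le_dotProduct_mulVec (fun i => hi₀ i (Finset.mem_univ i)) x

lemma inv_mulVec_vecMul_mul_self_mul [DecidableEq n] {S H : Matrix n n ℝ} (hS : S.IsSymm)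
    (hSu : IsUnit S.det) (hH : H.IsSymm) {μ : ℝ} {v : n → ℝ} (hv : (S * H * S) *ᵥ v = μ • v) :
    (S⁻¹ *ᵥ v) ᵥ* (S * S * H) = μ • (S⁻¹ *ᵥ v) := by
  rw [← mulVec_transpose, transpose_mul, transpose_mul, hS.eq, hH.eq, ← mulVec_smul, ← hv,
    mulVec_mulVec, mulVec_mulVec]
  congr 1
  rw [← Matrix.mul_assoc H, mul_nonsing_inv_cancel_right _ _ hSu, Matrix.mul_assoc S,
    nonsing_inv_mul_cancel_left _ _ hSu]

lemma exists_vecMul_diagonal_mul_eq_smul_le_lambdaMin [DecidableEq n] [Nonempty n] {d : n → ℝ}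
    (hd : ∀ i, 0 < d i) {H : Matrix n n ℝ} (hH : H.IsSymm) :
    ∃ μ z, z ≠ 0 ∧ z ᵥ* (diagonal d * H) = μ • z ∧
      μ ≤ lambdaMin (diagonal (fun i => √(d i)) * H * diagonal (fun i => √(d i))) := by
  set S := diagonal fun i => √(d i)
  have hS : S.IsSymm := diagonal_transpose _
  have hSS : S * S = diagonal d := by
    simp only [S, diagonal_mul_diagonal, Real.mul_self_sqrt (hd _).le]
  have hSu : IsUnit S.det := by
    rw [det_diagonal]
    exact (Finset.prod_pos fun i _ => Real.sqrt_pos.2 (hd i)).ne'.isUnit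
  have hA : (S * H * S).IsHermitian := isHermitian_iff_isSymm.mpr <| by
    rw [IsSymm, transpose_mul, transpose_mul, hS.eq, hH.eq, Matrix.mul_assoc]
  obtain ⟨μ, v, hv0, hv, hμ⟩ := hA.exists_mulVec_eq_smul_le_lambdaMin
  refine ⟨μ, S⁻¹ *ᵥ v, ?_, hSS ▸ inv_mulVec_vecMul_mul_self_mul hS hSu hH hv, hμ⟩
  simpa using (mulVec_injective_of_isUnit (isUnit_nonsing_inv_iff.mpr
    ((isUnit_iff_isUnit_det S).mpr hSu))).ne hv0

lemma sq_mul_lambdaMin_le_frobNorm_sq {M : Matrix n n ℝ} {z : n → ℝ} {c : ℝ} (hz : z ≠ 0)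
    (hM : z ᵥ* M = c • z) (B : Matrix n m ℝ) :
    c ^ 2 * lambdaMin (B * Bᵀ) ≤ frobNorm (M * B) ^ 2 := by
  have hs : 0 < ∑ i, z i ^ 2 := by
    simpa [dotProduct_self_eq_sum_sq] using dotProduct_self_star_pos_iff.mpr hz
  refine le_of_mul_le_mul_left ?_ hs
  calc (∑ i, z i ^ 2) * (c ^ 2 * lambdaMin (B * Bᵀ))
      = c ^ 2 * (lambdaMin (B * Bᵀ) * ∑ i, z i ^ 2) := by ring
    _ ≤ c ^ 2 * ∑ j, (z ᵥ* B) j ^ 2 := by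
      gcongr
      exact lambdaMin_mul_transpose_mul_sum_sq_le B z
    _ = ∑ j, (z ᵥ* (M * B)) j ^ 2 := by
      simp only [← vecMul_vecMul, hM, smul_vecMul, Pi.smul_apply, smul_eq_mul, mul_pow,
        Finset.mul_sum]
    _ ≤ (∑ i, z i ^ 2) * frobNorm (M * B) ^ 2 := by
      rw [frobNorm_sq]
      exact sum_sq_vecMul_le z _

end

theorem stmt13 (n m : ℕ) (d : Fin n → ℝ) (hd : ∀ i, 0 < d i)
    (H : Matrix (Fin n) (Fin n) ℝ) (hH : H.IsSymm)
    (γ : ℝ) (hγ : 0 < γ)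
    (hmin : lambdaMin (Matrix.diagonal (fun i => Real.sqrt (d i)) * H *
      Matrix.diagonal (fun i => Real.sqrt (d i))) = -γ)
    (η : ℝ) (hη : 0 < η) (G : Matrix (Fin n) (Fin m) ℝ) (t : ℕ) :
    (1 + η * γ) ^ (2 * t) *
        lambdaMin ((Matrix.diagonal d * G) * (Matrix.diagonal d * G)ᵀ)
      ≤ frobNorm (((1 - η • (Matrix.diagonal d * H)) ^ t) * (Matrix.diagonal d * G)) ^ 2 := by
  have : Nonempty (Fin n) := nonempty_of_lambdaMin_ne_zero (hmin ▸ neg_ne_zero.mpr hγ.ne')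
  obtain ⟨μ, z, hz0, hz, hμ⟩ := exists_vecMul_diagonal_mul_eq_smul_le_lambdaMin hd hH
  have hgrowth : (1 + η * γ) ^ (2 * t) ≤ ((1 - η * μ) ^ t) ^ 2 := by
    have : η * μ ≤ η * -γ := mul_le_mul_of_nonneg_left (hmin ▸ hμ) hη.le
    rw [← pow_mul, mul_comm t]
    exact pow_le_pow_left₀ (by positivity) (by linarith) _
  calc (1 + η * γ) ^ (2 * t) * lambdaMin ((diagonal d * G) * (diagonal d * G)ᵀ)
      ≤ ((1 - η * μ) ^ t) ^ 2 * lambdaMin ((diagonal d * G) * (diagonal d * G)ᵀ) :=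
        mul_le_mul_of_nonneg_right hgrowth (lambdaMin_mul_transpose_nonneg _)
    _ ≤ _ := sq_mul_lambdaMin_le_frobNorm_sq hz0
        (vecMul_pow_eq_smul (vecMul_one_sub_smul_eq_smul hz η) t) _
end

section
/- Let (Ω, ℱ, P) be a probability space, T ≥ 1 an integer, X_1, …, X_{T+1} integrable real random variables, A_1, …, A_T measurable events, and g > 0, δ ∈ (0,1), x* ∈ ℝ. Suppose for every t ∈ {1,…,T}: ∫_{A_t} (X_{t+1} − X_t) dP ≤ −g·P(A_t) and ∫_{A_tᶜ} (X_{t+1} − X_t) dP ≤ (δg/2)·P(A_tᶜ), and suppose E[X_{T+1}] ≥ x*. Then (1/T)·Σ_{t=1}^{T} P(A_t) ≤ δ/2 + (E[X_1] − x*)/(T·g); in particular, if T ≥ 2(E[X_1] − x*)/(δ·g), then (1/T)·Σ_{t=1}^{T} (1 − P(A_t)) ≥ 1 − δ. -/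
open scoped BigOperators
open MeasureTheory

/-
Split the expected increment E[X_{t+1} - X_t] over A_t and its complement: it is at most
-g·P(A_t) + δg/2. Summing over t telescopes to E[X_{T+1}] - E[X_1] ≤ -g·Σ P(A_t) + Tδg/2,
and E[X_{T+1}] ≥ x* turns this into the bound on the average of P(A_t).
-/

theorem integral_le_of_setIntegral_le_of_setIntegral_compl_le {Ω : Type*} [MeasurableSpace Ω]
    {μ : Measure Ω} [IsProbabilityMeasure μ] {f : Ω → ℝ} {s : Set Ω} {a c : ℝ}
    (hf : Integrable f μ) (hs : MeasurableSet s) (hc : 0 ≤ c)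
    (hs_le : ∫ x in s, f x ∂μ ≤ a * μ.real s) (hsc_le : ∫ x in sᶜ, f x ∂μ ≤ c * μ.real sᶜ) :
    ∫ x, f x ∂μ ≤ a * μ.real s + c := by
  have hsc : c * μ.real sᶜ ≤ c := mul_le_of_le_one_right hc measureReal_le_one
  rw [← integral_add_compl hs hf]
  linarith

theorem mul_sum_le_of_sub_le {f p : ℕ → ℝ} {g c : ℝ} (T : ℕ)
    (h : ∀ t ∈ Finset.Icc 1 T, f (t + 1) - f t ≤ -g * p t + c) :
    g * ∑ t ∈ Finset.Icc 1 T, p t ≤ f 1 - f (T + 1) + T * c := by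
  have htele : ∑ t ∈ Finset.Icc 1 T, (f (t + 1) - f t) = f (T + 1) - f 1 := by
    rw [← Finset.Ico_add_one_right_eq_Icc, Finset.sum_Ico_sub _ (by omega)]
  have hsum := Finset.sum_le_sum h
  rw [htele, Finset.sum_add_distrib, ← Finset.mul_sum, Finset.sum_const, Nat.card_Icc,
    Nat.add_sub_cancel, nsmul_eq_mul] at hsum
  linarith

theorem mean_le_of_mul_sum_le {p : ℕ → ℝ} {T : ℕ} {g δ D : ℝ} (hT : 0 < T) (hg : 0 < g)
    (h : g * ∑ t ∈ Finset.Icc 1 T, p t ≤ D + T * (δ * g / 2)) :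
    (1 / T : ℝ) * ∑ t ∈ Finset.Icc 1 T, p t ≤ δ / 2 + D / (T * g) := by
  have hS : ∑ t ∈ Finset.Icc 1 T, p t ≤ (D + T * (δ * g / 2)) / g := by
    rw [le_div_iff₀ hg]
    linarith
  calc (1 / T : ℝ) * ∑ t ∈ Finset.Icc 1 T, p t
      ≤ (1 / T : ℝ) * ((D + T * (δ * g / 2)) / g) := by gcongr
    _ = δ / 2 + D / (T * g) := by field_simp; ring

theorem one_sub_le_mean_one_sub {p : ℕ → ℝ} {T : ℕ} {g δ D : ℝ} (hT : 0 < T) (hg : 0 < g)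
    (hδ : 0 < δ) (hmean : (1 / T : ℝ) * ∑ t ∈ Finset.Icc 1 T, p t ≤ δ / 2 + D / (T * g))
    (hTlarge : 2 * D / (δ * g) ≤ T) :
    1 - δ ≤ (1 / T : ℝ) * ∑ t ∈ Finset.Icc 1 T, (1 - p t) := by
  have hTpos : (0 : ℝ) < T := by exact_mod_cast hT
  have hfrac : D / (T * g) ≤ δ / 2 := by
    rw [div_le_iff₀ (by positivity)]
    rw [div_le_iff₀ (by positivity)] at hTlarge
    linarith
  rw [Finset.sum_sub_distrib, Finset.sum_const, Nat.card_Icc, Nat.add_sub_cancel, mul_sub,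
    nsmul_eq_mul, mul_one, one_div_mul_cancel hTpos.ne']
  linarith

theorem stmt14_general {Ω : Type*} [MeasurableSpace Ω] (P : Measure Ω) [IsProbabilityMeasure P]
    (T : ℕ) (hT : 1 ≤ T) (X : ℕ → Ω → ℝ)
    (hint : ∀ t ∈ Finset.Icc 1 (T + 1), Integrable (X t) P)
    (A : ℕ → Set Ω) (hA : ∀ t ∈ Finset.Icc 1 T, MeasurableSet (A t))
    (g δ xstar : ℝ) (hg : 0 < g) (hδ0 : 0 < δ)
    (hdec : ∀ t ∈ Finset.Icc 1 T,
      ∫ ω in A t, (X (t + 1) ω - X t ω) ∂P ≤ -g * (P (A t)).toReal)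
    (hinc : ∀ t ∈ Finset.Icc 1 T,
      ∫ ω in (A t)ᶜ, (X (t + 1) ω - X t ω) ∂P ≤ (δ * g / 2) * (P ((A t)ᶜ)).toReal)
    (hlb : xstar ≤ ∫ ω, X (T + 1) ω ∂P) :
    (1 / T : ℝ) * ∑ t ∈ Finset.Icc 1 T, (P (A t)).toReal
      ≤ δ / 2 + ((∫ ω, X 1 ω ∂P) - xstar) / (T * g) ∧
    (2 * ((∫ ω, X 1 ω ∂P) - xstar) / (δ * g) ≤ (T : ℝ) →
      1 - δ ≤ (1 / T : ℝ) * ∑ t ∈ Finset.Icc 1 T, (1 - (P (A t)).toReal)) := by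
  have hstep : ∀ t ∈ Finset.Icc 1 T, (∫ ω, X (t + 1) ω ∂P) - ∫ ω, X t ω ∂P
      ≤ -g * (P (A t)).toReal + δ * g / 2 := by
    intro t ht
    obtain ⟨ht1, htT⟩ := Finset.mem_Icc.mp ht
    have hXt := hint t (Finset.mem_Icc.mpr ⟨ht1, by omega⟩)
    have hXt' := hint (t + 1) (Finset.mem_Icc.mpr ⟨by omega, by omega⟩)
    rw [← integral_sub hXt' hXt]
    exact integral_le_of_setIntegral_le_of_setIntegral_compl_le (hXt'.sub hXt) (hA t ht)
      (by positivity) (hdec t ht) (hinc t ht)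
  have hsum := mul_sum_le_of_sub_le (f := fun t => ∫ ω, X t ω ∂P)
    (p := fun t => (P (A t)).toReal) T hstep
  have hmean := mean_le_of_mul_sum_le (p := fun t => (P (A t)).toReal) (δ := δ)
    (D := (∫ ω, X 1 ω ∂P) - xstar) hT hg (by linarith)
  exact ⟨hmean, one_sub_le_mean_one_sub hT hg hδ0 hmean⟩

theorem stmt14 {Ω : Type*} [MeasurableSpace Ω] (P : Measure Ω) [IsProbabilityMeasure P]
    (T : ℕ) (hT : 1 ≤ T) (X : ℕ → Ω → ℝ)
    (hint : ∀ t ∈ Finset.Icc 1 (T + 1), Integrable (X t) P)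
    (A : ℕ → Set Ω) (hA : ∀ t ∈ Finset.Icc 1 T, MeasurableSet (A t))
    (g δ xstar : ℝ) (hg : 0 < g) (hδ0 : 0 < δ) (hδ1 : δ < 1)
    (hdec : ∀ t ∈ Finset.Icc 1 T,
      ∫ ω in A t, (X (t + 1) ω - X t ω) ∂P ≤ -g * (P (A t)).toReal)
    (hinc : ∀ t ∈ Finset.Icc 1 T,
      ∫ ω in (A t)ᶜ, (X (t + 1) ω - X t ω) ∂P ≤ (δ * g / 2) * (P ((A t)ᶜ)).toReal)
    (hlb : xstar ≤ ∫ ω, X (T + 1) ω ∂P) :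
    (1 / T : ℝ) * ∑ t ∈ Finset.Icc 1 T, (P (A t)).toReal
      ≤ δ / 2 + ((∫ ω, X 1 ω ∂P) - xstar) / (T * g) ∧
    (2 * ((∫ ω, X 1 ω ∂P) - xstar) / (δ * g) ≤ (T : ℝ) →
      1 - δ ≤ (1 / T : ℝ) * ∑ t ∈ Finset.Icc 1 T, (1 - (P (A t)).toReal)) :=
  stmt14_general P T hT X hint A hA g δ xstar hg hδ0 hdec hinc hlb
end
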